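/- Let $R$ be a commutative ring, $q \in R$, and $X, Y : \mathbb{N} \times \mathbb{N} \to R$ functions satisfying $X(k,l)\,Y(k+1,l) = q\,Y(k,l)\,X(k,l+1)$ for all $k,l$. Fix $k, l \in \mathbb{N}$ and set $n = k+l$. Then the sum of the weights $\mathrm{wt}(w)$ over all words $w : \{0,\dots,n-1\} \to \{\mathsf{X},\mathsf{Y}\}$ with exactly $k$ letters $\mathsf{X}$ (equivalently, over all monotone lattice paths from $(0,0)$ to $(k,l)$) equals $\binom{n}{k}_q\,\Big(\prod_{j=0}^{l-1} Y(0,j)\Big)\Big(\prod_{i=0}^{k-1} X(i,l)\Big)$. -/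
import Mathlib


/-- The Gaussian binomial coefficient `qBinom q n k`, defined via the q-Pascal
recursion `qBinom q (n+1) (k+1) = qBinom q n k + q^(k+1) * qBinom q n (k+1)`,
with `qBinom q n 0 = 1` and `qBinom q 0 (k+1) = 0`. -/
def qBinom {R : Type*} [CommRing R] (q : R) : ℕ → ℕ → R
  | _, 0 => 1
  | 0, _ + 1 => 0
  | n + 1, k + 1 => qBinom q n k + q ^ (k + 1) * qBinom q n (k + 1)

/-- Number of `X`'s (encoded as `true`) among the first `i` letters of the word `w`. -/
def countX {n : ℕ} (w : Fin n → Bool) (i : ℕ) : ℕ :=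
  (Finset.univ.filter fun j : Fin n => (j : ℕ) < i ∧ w j = true).card

/-- Number of `Y`'s (encoded as `false`) among the first `i` letters of the word `w`. -/
def countY {n : ℕ} (w : Fin n → Bool) (i : ℕ) : ℕ :=
  (Finset.univ.filter fun j : Fin n => (j : ℕ) < i ∧ w j = false).card

/-- The weight of a word: the product over positions `i` of `X(aᵢ,bᵢ)` if the letter
at `i` is `X` and `Y(aᵢ,bᵢ)` if it is `Y`, where `(aᵢ,bᵢ)` counts the `X`'s and `Y`'s
among the first `i` letters. -/
def wt {R : Type*} [CommRing R] (X Y : ℕ × ℕ → R) {n : ℕ} (w : Fin n → Bool) : R :=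
  ∏ i : Fin n,
    if w i then X (countX w (i : ℕ), countY w (i : ℕ))
    else Y (countX w (i : ℕ), countY w (i : ℕ))

lemma qBinom_of_lt {R : Type*} [CommRing R] (q : R) : ∀ n k, n < k → qBinom q n k = 0 := by
  intro n
  induction n with
  | zero => intro k hk; match k, hk with | k+1, _ => rfl
  | succ n ih =>
    intro k hk
    match k, hk with
    | k+1, hk =>
      rw [qBinom, ih k (by omega), ih (k+1) (by omega)]
      ring

lemma qBinom_self {R : Type*} [CommRing R] (q : R) : ∀ n, qBinom q n n = 1 := by
  intro n
  induction n with
  | zero => rfl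
  | succ n ih => rw [qBinom, ih, qBinom_of_lt q n (n+1) (by omega)]; ring

lemma card_filter_lt (n i : ℕ) (hi : i ≤ n) :
    (Finset.univ.filter fun j : Fin n => (j : ℕ) < i).card = i := by
  rw [Finset.card_filter, Fin.sum_univ_eq_sum_range (fun m => if m < i then 1 else 0),
    ← Finset.card_filter]
  have : (Finset.range n).filter (fun m => m < i) = Finset.range i := by
    ext m; simp; omega
  rw [this, Finset.card_range]

lemma card_snoc_lt {n : ℕ} (w : Fin n → Bool) (b c : Bool) (i : ℕ) (hi : i ≤ n) :
    (Finset.univ.filter fun j : Fin (n+1) => (j : ℕ) < i ∧ (Fin.snoc w b : Fin (n+1) → Bool) j = c).card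
      = (Finset.univ.filter fun j : Fin n => (j : ℕ) < i ∧ w j = c).card := by
  rw [Finset.card_filter, Finset.card_filter, Fin.sum_univ_castSucc]
  have hlast : ((Fin.last n : Fin (n+1)) : ℕ) = n := rfl
  simp only [Fin.snoc_castSucc, Fin.coe_castSucc, hlast, Fin.snoc_last]
  rw [if_neg (by omega)]
  simp

lemma countX_snoc {n : ℕ} (w : Fin n → Bool) (b : Bool) (i : ℕ) (hi : i ≤ n) :
    countX (Fin.snoc w b) i = countX w i := card_snoc_lt w b true i hi

lemma countY_snoc {n : ℕ} (w : Fin n → Bool) (b : Bool) (i : ℕ) (hi : i ≤ n) :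
    countY (Fin.snoc w b) i = countY w i := card_snoc_lt w b false i hi

lemma card_snoc_total {n : ℕ} (w : Fin n → Bool) (b : Bool) :
    (Finset.univ.filter fun j : Fin (n+1) => (Fin.snoc w b : Fin (n+1) → Bool) j = true).card
      = (Finset.univ.filter fun j : Fin n => w j = true).card + (if b then 1 else 0) := by
  rw [Finset.card_filter, Finset.card_filter, Fin.sum_univ_castSucc]
  simp only [Fin.snoc_castSucc, Fin.snoc_last]

lemma countX_total {n : ℕ} (w : Fin n → Bool) :
    countX w n = (Finset.univ.filter fun j : Fin n => w j = true).card := by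
  unfold countX
  congr 1
  ext j
  simp [j.isLt]

lemma countX_add_countY {n : ℕ} (w : Fin n → Bool) :
    countX w n + countY w n = n := by
  unfold countX countY
  have h1 : (Finset.univ.filter fun j : Fin n => (j : ℕ) < n ∧ w j = true)
      = Finset.univ.filter fun j : Fin n => w j = true := by ext j; simp [j.isLt]
  have h2 : (Finset.univ.filter fun j : Fin n => (j : ℕ) < n ∧ w j = false)
      = Finset.univ.filter fun j : Fin n => ¬ (w j = true) := by ext j; simp [j.isLt]
  rw [h1, h2, Finset.card_filter_add_card_filter_not, Finset.card_univ,
    Fintype.card_fin]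

lemma wt_snoc {R : Type*} [CommRing R] (X Y : ℕ × ℕ → R) {n : ℕ} (w : Fin n → Bool)
    (b : Bool) :
    wt X Y (Fin.snoc w b) = wt X Y w *
      (if b then X (countX w n, countY w n) else Y (countX w n, countY w n)) := by
  unfold wt
  rw [Fin.prod_univ_castSucc]
  have hlast : ((Fin.last n : Fin (n+1)) : ℕ) = n := rfl
  congr 1
  · apply Finset.prod_congr rfl
    intro i _
    rw [Fin.snoc_castSucc, Fin.coe_castSucc, countX_snoc w b i (by omega),
      countY_snoc w b i (by omega)]
  · rw [Fin.snoc_last, hlast, countX_snoc w b n le_rfl, countY_snoc w b n le_rfl]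

lemma comm_prod {R : Type*} [CommRing R] (q : R) (X Y : ℕ × ℕ → R)
    (hq : ∀ k l, X (k, l) * Y (k + 1, l) = q * (Y (k, l) * X (k, l + 1))) :
    ∀ k m, (∏ i ∈ Finset.range k, X (i, m)) * Y (k, m)
      = q ^ k * (Y (0, m) * ∏ i ∈ Finset.range k, X (i, m + 1)) := by
  intro k m
  induction k with
  | zero => simp
  | succ k ih =>
    rw [Finset.prod_range_succ, mul_assoc, hq k m,
      show (∏ i ∈ Finset.range k, X (i, m)) * (q * (Y (k, m) * X (k, m+1)))
        = q * (((∏ i ∈ Finset.range k, X (i, m)) * Y (k, m)) * X (k, m+1)) by ring,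
      ih, Finset.prod_range_succ]
    ring

lemma key_k0 {R : Type*} [CommRing R] (X Y : ℕ × ℕ → R) (n : ℕ) :
    ∑ w ∈ Finset.univ.filter (fun w : Fin n → Bool =>
        (Finset.univ.filter fun i => w i = true).card = 0), wt X Y w
      = ∏ j ∈ Finset.range n, Y (0, j) := by
  have hf : (Finset.univ.filter (fun w : Fin n → Bool =>
      (Finset.univ.filter fun i => w i = true).card = 0)) = {fun _ => false} := by
    ext w
    simp only [Finset.mem_filter, Finset.mem_univ, true_and, Finset.mem_singleton]
    constructor
    · intro h
      rw [Finset.card_eq_zero, Finset.filter_eq_empty_iff] at h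
      funext i; simpa using h (Finset.mem_univ i)
    · intro h; subst h; simp
  rw [hf, Finset.sum_singleton]
  unfold wt
  rw [← Fin.prod_univ_eq_prod_range (fun j => Y (0, j)) n]
  apply Finset.prod_congr rfl
  intro i _
  have hX : countX (fun _ : Fin n => false) (i : ℕ) = 0 := by
    unfold countX; simp
  have hY : countY (fun _ : Fin n => false) (i : ℕ) = (i : ℕ) := by
    unfold countY
    have he : (Finset.univ.filter fun j : Fin n =>
        (j : ℕ) < (i : ℕ) ∧ (fun _ : Fin n => false) j = false)
        = Finset.univ.filter fun j : Fin n => (j : ℕ) < (i : ℕ) := by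
      ext j; simp
    rw [he]
    exact card_filter_lt n i (le_of_lt i.isLt)
  simp [hX, hY]

lemma key_l0 {R : Type*} [CommRing R] (X Y : ℕ × ℕ → R) (n : ℕ) :
    ∑ w ∈ Finset.univ.filter (fun w : Fin n → Bool =>
        (Finset.univ.filter fun i => w i = true).card = n), wt X Y w
      = ∏ i ∈ Finset.range n, X (i, 0) := by
  have hf : (Finset.univ.filter (fun w : Fin n → Bool =>
      (Finset.univ.filter fun i => w i = true).card = n)) = {fun _ => true} := by
    ext w
    simp only [Finset.mem_filter, Finset.mem_univ, true_and, Finset.mem_singleton]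
    constructor
    · intro h
      have : (Finset.univ.filter fun i : Fin n => w i = true) = Finset.univ :=
        Finset.eq_univ_of_card _ (by rw [h, Fintype.card_fin])
      funext i
      have := Finset.mem_filter.mp (this ▸ Finset.mem_univ i)
      exact this.2
    · intro h; subst h; simp
  rw [hf, Finset.sum_singleton]
  unfold wt
  rw [← Fin.prod_univ_eq_prod_range (fun i => X (i, 0)) n]
  apply Finset.prod_congr rfl
  intro i _
  have hX : countX (fun _ : Fin n => true) (i : ℕ) = (i : ℕ) := by
    unfold countX
    have he : (Finset.univ.filter fun j : Fin n =>
        (j : ℕ) < (i : ℕ) ∧ (fun _ : Fin n => true) j = true)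
        = Finset.univ.filter fun j : Fin n => (j : ℕ) < (i : ℕ) := by
      ext j; simp
    rw [he]
    exact card_filter_lt n i (le_of_lt i.isLt)
  have hY : countY (fun _ : Fin n => true) (i : ℕ) = 0 := by
    unfold countY; simp
  simp [hX, hY]

def boolSnocEquiv (n : ℕ) : (Fin n → Bool) × Bool ≃ (Fin (n + 1) → Bool) where
  toFun p := Fin.snoc p.1 p.2
  invFun w := (fun i => w i.castSucc, w (Fin.last n))
  left_inv p := by
    obtain ⟨w, b⟩ := p
    refine Prod.ext ?_ ?_
    · funext i; simp
    · simp
  right_inv w := by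
    funext i
    refine Fin.lastCases ?_ ?_ i <;> simp

lemma key {R : Type*} [CommRing R] (q : R) (X Y : ℕ × ℕ → R)
    (hq : ∀ k l, X (k, l) * Y (k + 1, l) = q * (Y (k, l) * X (k, l + 1))) :
    ∀ n k l, k + l = n →
    ∑ w ∈ Finset.univ.filter (fun w : Fin n → Bool =>
        (Finset.univ.filter fun i => w i = true).card = k), wt X Y w
      = qBinom q n k *
        ((∏ j ∈ Finset.range l, Y (0, j)) * ∏ i ∈ Finset.range k, X (i, l)) := by
  intro n
  induction n with
  | zero =>
    intro k l h
    have hk : k = 0 := by omega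
    have hl : l = 0 := by omega
    subst hk; subst hl
    rw [key_k0 X Y 0]
    simp [qBinom]
  | succ n ih =>
    intro k l h
    match k with
    | 0 =>
      have hl : l = n + 1 := by omega
      subst hl
      rw [key_k0 X Y (n+1), show qBinom q (n+1) 0 = 1 from rfl]
      simp
    | k' + 1 =>
      match l with
      | 0 =>
        have hk : k' = n := by omega
        subst hk
        rw [key_l0 X Y (k'+1), qBinom_self]
        simp
      | l' + 1 =>
        have hn : k' + 1 + l' = n := by omega
        have happ : ∀ p : (Fin n → Bool) × Bool,
            (boolSnocEquiv n) p = (Fin.snoc p.1 p.2 : Fin (n+1) → Bool) := fun _ => rfl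
        rw [Finset.sum_filter, ← Equiv.sum_comp (boolSnocEquiv n)
          (fun w : Fin (n+1) → Bool =>
            if (Finset.univ.filter fun i => w i = true).card = k' + 1
            then wt X Y w else 0), Fintype.sum_prod_type]
        simp only [happ, Fintype.sum_bool]
        rw [Finset.sum_add_distrib]
        have h1 : (∑ w : Fin n → Bool,
              if (Finset.univ.filter fun i =>
                  (Fin.snoc w true : Fin (n+1) → Bool) i = true).card = k' + 1
              then wt X Y (Fin.snoc w true) else 0)
            = (∑ w ∈ Finset.univ.filter (fun w : Fin n → Bool =>
                (Finset.univ.filter fun i => w i = true).card = k'), wt X Y w)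
                * X (k', l' + 1) := by
          rw [Finset.sum_mul, Finset.sum_filter]
          apply Finset.sum_congr rfl
          intro w _
          rw [card_snoc_total, wt_snoc]
          by_cases hw : (Finset.univ.filter fun i => w i = true).card = k'
          · rw [if_pos (by simp [hw]), if_pos hw]
            have hx : countX w n = k' := by rw [countX_total, hw]
            have hy : countY w n = l' + 1 := by
              have := countX_add_countY w; omega
            simp [hx, hy]
          · rw [if_neg (by simpa using hw), if_neg hw]
        have h2 : (∑ w : Fin n → Bool,
              if (Finset.univ.filter fun i =>
                  (Fin.snoc w false : Fin (n+1) → Bool) i = true).card = k' + 1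
              then wt X Y (Fin.snoc w false) else 0)
            = (∑ w ∈ Finset.univ.filter (fun w : Fin n → Bool =>
                (Finset.univ.filter fun i => w i = true).card = k' + 1), wt X Y w)
                * Y (k' + 1, l') := by
          rw [Finset.sum_mul, Finset.sum_filter]
          apply Finset.sum_congr rfl
          intro w _
          rw [card_snoc_total, wt_snoc]
          by_cases hw : (Finset.univ.filter fun i => w i = true).card = k' + 1
          · rw [if_pos (by simp [hw]), if_pos hw]
            have hx : countX w n = k' + 1 := by rw [countX_total, hw]
            have hy : countY w n = l' := by
              have := countX_add_countY w; omega
            simp [hx, hy]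
          · rw [if_neg (by simpa using hw), if_neg hw]
        rw [h1, h2, ih k' (l' + 1) (by omega), ih (k' + 1) l' (by omega), qBinom]
        have hc := comm_prod q X Y hq (k' + 1) l'
        simp only [Finset.prod_range_succ] at hc ⊢
        linear_combination qBinom q n (k' + 1) * (∏ j ∈ Finset.range l', Y (0, j)) * hc


/-- If `X(k,l) Y(k+1,l) = q Y(k,l) X(k,l+1)`, then the sum of the weights over all
words of length `k+l` with exactly `k` letters `X` equals
`[k+l choose k]_q * (∏_{j<l} Y(0,j)) * (∏_{i<k} X(i,l))`. -/
theorem sum_wt_eq_qBinom_mul {R : Type*} [CommRing R] (q : R) (X Y : ℕ × ℕ → R)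
    (hq : ∀ k l, X (k, l) * Y (k + 1, l) = q * (Y (k, l) * X (k, l + 1)))
    (k l : ℕ) :
    ∑ w ∈ Finset.univ.filter (fun w : Fin (k + l) → Bool =>
        (Finset.univ.filter fun i => w i = true).card = k), wt X Y w
      = qBinom q (k + l) k *
        ((∏ j ∈ Finset.range l, Y (0, j)) * ∏ i ∈ Finset.range k, X (i, l)) :=
  key q X Y hq (k + l) k l rfl
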